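/- arXiv:1305.2855 — 3 statements merged into one kernel-verified Lean document; each statement's English description precedes it below -/
import Mathlib

section
/- For the Lie algebra g₃ with bracket [X,Y]=X and orthonormal basis {X,Y,Z,W}, the Levi-Civita connection satisfies ∇_X X = −Y, ∇_X Y = X, and ∇ vanishes on all other pairs of basis vectors; consequently R(X,Y)X = Y, R(X,Y)Y = −X, and R vanishes on all other basis triples. -/
open Real

abbrev V4 := Fin 4 → ℝ

/-- the inner product making the basis orthonormal -/
def ip (u v : V4) : ℝ := u 0 * v 0 + u 1 * v 1 + u 2 * v 2 + u 3 * v 3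

def X : V4 := ![1, 0, 0, 0]
def Y : V4 := ![0, 1, 0, 0]
def Z : V4 := ![0, 0, 1, 0]
def W : V4 := ![0, 0, 0, 1]

def e : Fin 4 → V4 := ![X, Y, Z, W]

def br (u v : V4) : V4 := (u 0 * v 1 - u 1 * v 0) • X

theorem stmt6 (nabla : V4 → V4 → V4)
    (hK : ∀ u v w : V4, 2 * ip (nabla u v) w = ip (br u v) w - ip (br v w) u + ip (br w u) v)
    (R : V4 → V4 → V4 → V4)
    (hR : ∀ u v w : V4, R u v w = nabla u (nabla v w) - nabla v (nabla u w) - nabla (br u v) w) :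
    nabla X X = -Y ∧ nabla X Y = X ∧
    nabla X Z = 0 ∧ nabla X W = 0 ∧
    nabla Y X = 0 ∧ nabla Y Y = 0 ∧ nabla Y Z = 0 ∧ nabla Y W = 0 ∧
    nabla Z X = 0 ∧ nabla Z Y = 0 ∧ nabla Z Z = 0 ∧ nabla Z W = 0 ∧
    nabla W X = 0 ∧ nabla W Y = 0 ∧ nabla W Z = 0 ∧ nabla W W = 0 ∧
    R X Y X = Y ∧ R X Y Y = -X ∧
    (∀ i j k : Fin 4,
      ¬(((i, j) = ((0 : Fin 4), (1 : Fin 4)) ∨ (i, j) = ((1 : Fin 4), (0 : Fin 4))) ∧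
          (k = (0 : Fin 4) ∨ k = (1 : Fin 4))) →
        R (e i) (e j) (e k) = 0) := by
  have nab : ∀ u v : V4, nabla u v = (u 0 * v 1) • X - (u 0 * v 0) • Y := by
    intro u v
    funext k
    fin_cases k
    · have h := hK u v X
      simp [ip, br, X, Y] at h ⊢
      linarith
    · have h := hK u v Y
      simp [ip, br, X, Y] at h ⊢
      linarith
    · have h := hK u v Z
      simp [ip, br, X, Y, Z] at h ⊢
      linarith
    · have h := hK u v W
      simp [ip, br, X, Y, W] at h ⊢
      linarith
  have hRf : ∀ u v w : V4, R u v w =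
      (u 0 * v 1 - u 1 * v 0) • ((w 0) • Y - (w 1) • X) := by
    intro u v w
    rw [hR, nab, nab, nab, nab, nab]
    funext k
    fin_cases k <;> simp [br, X, Y] <;> ring
  refine ⟨?_, ?_, ?_, ?_, ?_, ?_, ?_, ?_, ?_, ?_, ?_, ?_, ?_, ?_, ?_, ?_, ?_, ?_, ?_⟩
  all_goals try (rw [nab]; funext k; fin_cases k <;> simp [X, Y, Z, W] <;> ring)
  all_goals try (rw [hRf]; funext k; fin_cases k <;> simp [X, Y, Z, W] <;> ring)
  intro i j k h
  rw [hRf]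
  by_cases hij : ((i, j) = ((0 : Fin 4), (1 : Fin 4)) ∨ (i, j) = ((1 : Fin 4), (0 : Fin 4)))
  · have hk : ¬(k = 0 ∨ k = 1) := fun hk' => h ⟨hij, hk'⟩
    have hw : (e k 0) • Y - (e k 1) • X = (0 : V4) := by
      fin_cases k
      · exact absurd (Or.inl rfl) hk
      · exact absurd (Or.inr rfl) hk
      · simp [e, Z, X, Y]
      · simp [e, W, X, Y]
    rw [hw, smul_zero]
  · have hc : e i 0 * e j 1 - e i 1 * e j 0 = 0 := by
      fin_cases i <;> fin_cases j <;>
        first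
        | exact absurd (Or.inl rfl) hij
        | exact absurd (Or.inr rfl) hij
        | simp [e, X, Y, Z, W, Matrix.vecHead, Matrix.vecTail]
    rw [hc, zero_smul]
end

section
/- For the Lie algebra g₃ with [X,Y]=X, the sectional curvature of the plane spanned by orthonormal vectors U = aX+bY+cZ+dW and V = a'X+b'Y+c'Z+d'W equals −(ab'−ba')² ≤ 0, and the scalar curvature is the constant −2. -/
open Real

/-!
The Koszul formula determines the connection, and it is `∇_u v = u₀v₁ X − u₀v₀ Y`: only the
`X`-component of `u` acts, as the rotation of the `(X, Y)`-plane. Consequently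
`⟨R(v,u)u, v⟩ = −(u₀v₁ − u₁v₀)²` is minus the squared area of the projection of the plane onto
`span{X, Y}`; among basis planes only `{X, Y}` contributes, twice, to the scalar curvature.
-/

lemma eq_of_forall_ip_eq {v v' : V4} (h : ∀ w, ip v w = ip v' w) : v = v' := by
  funext i
  fin_cases i
  · simpa [ip, X] using h X
  · simpa [ip, Y] using h Y
  · simpa [ip, Z] using h Z
  · simpa [ip, W] using h W

def leviCivita (u v : V4) : V4 := (u 0 * v 1) • X - (u 0 * v 0) • Y

lemma two_mul_ip_leviCivita (u v w : V4) :
    2 * ip (leviCivita u v) w = ip (br u v) w - ip (br v w) u + ip (br w u) v := by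
  simp [leviCivita, ip, br, X, Y]
  ring

lemma eq_leviCivita_of_koszul {nabla : V4 → V4 → V4}
    (hK : ∀ u v w : V4, 2 * ip (nabla u v) w = ip (br u v) w - ip (br v w) u + ip (br w u) v) :
    nabla = leviCivita := by
  funext u v
  refine eq_of_forall_ip_eq fun w => ?_
  have h := (hK u v w).trans (two_mul_ip_leviCivita u v w).symm
  linarith

lemma ip_curvature_leviCivita (u v : V4) :
    ip (leviCivita v (leviCivita u u) - leviCivita u (leviCivita v u)
      - leviCivita (br v u) u) v = -(u 0 * v 1 - u 1 * v 0) ^ 2 := by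
  simp [leviCivita, ip, br, X, Y]
  ring

lemma sum_ne_basis_area_sq :
    (∑ j : Fin 4, ∑ k : Fin 4,
      if j ≠ k then -(e j 0 * e k 1 - e j 1 * e k 0) ^ 2 /
        (ip (e j) (e j) * ip (e k) (e k) - ip (e j) (e k) ^ 2) else 0) = -2 := by
  simp only [Fin.sum_univ_four, e, ip, X, Y, Z, W, Matrix.cons_val_zero, Matrix.cons_val_one,
    Matrix.cons_val_two, Matrix.cons_val_three]
  norm_num

theorem stmt7 (nabla : V4 → V4 → V4)
    (hK : ∀ u v w : V4, 2 * ip (nabla u v) w = ip (br u v) w - ip (br v w) u + ip (br w u) v)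
    (R : V4 → V4 → V4 → V4)
    (hR : ∀ u v w : V4, R u v w = nabla u (nabla v w) - nabla v (nabla u w) - nabla (br u v) w)
    (a b c d a' b' c' d' : ℝ) (u v : V4)
    (hu : u = a • X + b • Y + c • Z + d • W)
    (hv : v = a' • X + b' • Y + c' • Z + d' • W)
    (huu : ip u u = 1) (hvv : ip v v = 1) (huv : ip u v = 0) :
    ip (R v u u) v / (ip u u * ip v v - ip u v ^ 2) = -((a * b' - b * a') ^ 2) ∧
    ip (R v u u) v / (ip u u * ip v v - ip u v ^ 2) ≤ 0 ∧
    (∑ j : Fin 4, ∑ k : Fin 4, if j ≠ k then ip (R (e k) (e j) (e j)) (e k) / (ip (e j) (e j) * ip (e k) (e k) - ip (e j) (e k) ^ 2) else 0) = -2 := by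
  obtain rfl := eq_leviCivita_of_koszul hK
  have hRuv : ∀ p q : V4, ip (R q p p) q = -(p 0 * q 1 - p 1 * q 0) ^ 2 := fun p q => by
    rw [hR, ip_curvature_leviCivita]
  have hsec : ip (R v u u) v / (ip u u * ip v v - ip u v ^ 2) = -((a * b' - b * a') ^ 2) := by
    subst hu hv
    rw [huu, hvv, huv, hRuv]
    simp [X, Y, Z, W]
  refine ⟨hsec, hsec ▸ neg_nonpos.mpr (sq_nonneg _), ?_⟩
  simp only [hRuv]
  exact sum_ne_basis_area_sq
end

section
/- In the Lie algebra g₃ with bracket [X,Y]=X, a vector Q ∈ g₃ is parallel with respect to the Levi-Civita connection (∇_U Q = 0 for all U) if and only if Q lies in the span of Z and W. -/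
open Real

theorem stmt16 (nabla : V4 → V4 → V4)
    (hK : ∀ u v w : V4, 2 * ip (nabla u v) w = ip (br u v) w - ip (br v w) u + ip (br w u) v)
    (Q : V4) :
    (∀ u : V4, nabla u Q = 0) ↔ (∃ c d : ℝ, Q = c • Z + d • W) := by
  constructor
  · intro h
    have hQ1 : Q 1 = 0 := by
      have := hK X Q X
      rw [h X] at this
      simp [ip, br, X] at this
      linarith
    have hQ0 : Q 0 = 0 := by
      have := hK X Q Y
      rw [h X] at this
      simp [ip, br, X, Y] at this
      linarith
    refine ⟨Q 2, Q 3, ?_⟩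
    funext i
    fin_cases i <;> simp [X, Y, Z, W, hQ0, hQ1]
  · rintro ⟨c, d, rfl⟩ u
    funext i
    fin_cases i
    · have := hK u (c • Z + d • W) X
      simp [ip, br, X, Y, Z, W] at this ⊢
      linarith
    · have := hK u (c • Z + d • W) Y
      simp [ip, br, X, Y, Z, W] at this ⊢
      linarith
    · have := hK u (c • Z + d • W) Z
      simp [ip, br, X, Y, Z, W] at this ⊢
      linarith
    · have := hK u (c • Z + d • W) W
      simp [ip, br, X, Y, Z, W] at this ⊢
      linarith
end
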